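/- Let $X$ be a topological space and let $\mathcal{R}$ be a sheaf of commutative rings on $X$ all of whose stalks are local rings. Let $\mathcal{M}$ be a sheaf of $\mathcal{R}$-modules which is locally projective of finite rank, i.e. every point $x \in X$ has an open neighborhood $U$ for which there exist a natural number $N$ and a sheaf $\mathcal{F}$ of $\mathcal{R}|_U$-modules such that $\mathcal{M}|_U \oplus \mathcal{F}$ is isomorphic to the free module $(\mathcal{R}|_U)^N$. Then $\mathcal{M}$ is locally free: every point $x \in X$ has an open neighborhood $V$ and a natural number $k$ such that $\mathcal{M}|_V$ is isomorphic, as a sheaf of $\mathcal{R}|_V$-modules, to $(\mathcal{R}|_V)^k$. -/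

import Mathlib

open CategoryTheory TopologicalSpace Opposite

universe u

/-- A sheaf of modules over a sheaf of commutative rings `R` on a topological
space `X`, given concretely: for each open `V` an `R(V)`-module `obj V`,
with additive restriction maps that are semilinear with respect to the
restriction maps of `R`, satisfying the identity, composition and unique
gluing (sheaf) axioms. -/
structure SheafOfModulesOver {X : TopCat.{u}} (R : TopCat.Sheaf CommRingCat.{u} X) where
  obj : Opens X → Type u
  addCommGroup : ∀ V : Opens X, AddCommGroup (obj V)
  module : ∀ V : Opens X, Module (R.presheaf.obj (op V)) (obj V)
  res : ∀ {V W : Opens X}, W ≤ V → obj V → obj W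
  res_self : ∀ (V : Opens X) (m : obj V), res le_rfl m = m
  res_res : ∀ {V W Z : Opens X} (hWV : W ≤ V) (hZW : Z ≤ W) (m : obj V),
    res hZW (res hWV m) = res (hZW.trans hWV) m
  res_add : ∀ {V W : Opens X} (h : W ≤ V) (m m' : obj V),
    res h (m + m') = res h m + res h m'
  res_smul : ∀ {V W : Opens X} (h : W ≤ V) (r : R.presheaf.obj (op V)) (m : obj V),
    res h (r • m) = R.presheaf.map (homOfLE h).op r • res h m
  isSheaf : ∀ {ι : Type u} (V : ι → Opens X) (s : ∀ i : ι, obj (V i)),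
    (∀ i j : ι, res (inf_le_left : V i ⊓ V j ≤ V i) (s i)
      = res (inf_le_right : V i ⊓ V j ≤ V j) (s j)) →
    ∃! t : obj (iSup V), ∀ i : ι, res (le_iSup V i) t = s i

attribute [instance] SheafOfModulesOver.addCommGroup SheafOfModulesOver.module

/-!
The splitting `M|_U ⊕ F ≅ (R|_U)^N` is recorded by the idempotent matrix `P` over `R(U)` of the
projection onto `M`, compatibly with restriction. At a point `x` the germ of `P` is an idempotent
matrix over the local ring `R_x`; its image is finitely generated projective, hence free, so
`P_x = G H` with `H G = 1`. Lifting `G` and `H` to sections, both identities already hold on a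
neighbourhood `V` of `x`, and there `m ↦ H e(m, 0)` identifies `M|_V` with `(R|_V)^k`.
-/
namespace Module.End

theorem exists_comp_eq_of_isIdempotentElem {S M : Type*} [CommRing S] [IsLocalRing S]
    [AddCommGroup M] [Module S M] [Module.Finite S M] [Module.Projective S M]
    {f : Module.End S M} (hf : IsIdempotentElem f) :
    ∃ (k : ℕ) (g : (Fin k → S) →ₗ[S] M) (h : M →ₗ[S] Fin k → S),
      h ∘ₗ g = LinearMap.id ∧ g ∘ₗ h = f := by
  have hp := LinearMap.IsIdempotentElem.isProj_range f hf
  have : Module.Projective S (LinearMap.range f) :=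
    .of_split (LinearMap.range f).subtype hp.codRestrict
      (LinearMap.ext fun v => hp.codRestrict_apply_cod v)
  have : Module.Free S (LinearMap.range f) := Module.free_of_flat_of_isLocalRing
  let b := Module.finBasis S (LinearMap.range f)
  refine ⟨_, (LinearMap.range f).subtype ∘ₗ b.equivFun.symm.toLinearMap,
    b.equivFun.toLinearMap ∘ₗ hp.codRestrict, ?_, ?_⟩
  · refine LinearMap.ext fun a => ?_
    simp only [LinearMap.comp_apply, LinearEquiv.coe_coe, Submodule.subtype_apply,
      hp.codRestrict_apply_cod, LinearEquiv.apply_symm_apply, LinearMap.id_apply]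
  · ext v : 1
    simp [hp.codRestrict_apply]

end Module.End

theorem Matrix.exists_mul_eq_one_and_mul_eq_of_isIdempotentElem {S : Type*} [CommRing S]
    [IsLocalRing S] {n : Type*} [Fintype n] [DecidableEq n] {Q : Matrix n n S}
    (hQ : IsIdempotentElem Q) :
    ∃ (k : ℕ) (G : Matrix n (Fin k) S) (H : Matrix (Fin k) n S),
      H * G = 1 ∧ G * H = Q := by
  have hf : IsIdempotentElem (Matrix.toLin' Q) := by
    rw [IsIdempotentElem, Module.End.mul_eq_comp, ← Matrix.toLin'_mul, hQ.eq]
  obtain ⟨k, g, h, hhg, hgh⟩ := Module.End.exists_comp_eq_of_isIdempotentElem hf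
  refine ⟨k, LinearMap.toMatrix' g, LinearMap.toMatrix' h, ?_, ?_⟩
  · rw [← LinearMap.toMatrix'_comp, hhg, LinearMap.toMatrix'_id]
  · rw [← LinearMap.toMatrix'_comp, hgh, LinearMap.toMatrix'_toLin']

theorem LinearMap.toMatrix'_eq_map_of_map_comp {S T : Type*} [CommRing S] [CommRing T]
    {m n : Type*} [Fintype n] [DecidableEq n] (φ : S →+* T)
    (f : (n → S) →ₗ[S] (m → S)) (g : (n → T) →ₗ[T] (m → T))
    (hfg : ∀ v, g (φ ∘ v) = φ ∘ f v) :
    LinearMap.toMatrix' g = (LinearMap.toMatrix' f).map φ := by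
  ext i j
  have : (Pi.single j 1 : n → T) = φ ∘ Pi.single j 1 := by
    ext l
    simp [Pi.apply_single (fun _ => φ) (fun _ => map_zero φ)]
  simp only [LinearMap.toMatrix'_apply, Matrix.map_apply, this, hfg, Function.comp_apply]

namespace LinearEquiv

variable {S : Type*} [CommRing S] {M F E K : Type*} [AddCommGroup M] [Module S M]
  [AddCommGroup F] [Module S F] [AddCommGroup E] [Module S E] [AddCommGroup K] [Module S K]

def fstProj (e : (M × F) ≃ₗ[S] E) : Module.End S E :=
  e.conj (LinearMap.inl S M F ∘ₗ LinearMap.fst S M F)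

@[simp]
theorem fstProj_apply (e : (M × F) ≃ₗ[S] E) (v : E) : e.fstProj v = e ((e.symm v).1, 0) := rfl

theorem isIdempotentElem_fstProj (e : (M × F) ≃ₗ[S] E) : IsIdempotentElem e.fstProj := by
  ext v
  simp

theorem fstProj_comp_map {T : Type*} [CommRing T] {M' F' : Type*} [AddCommGroup M'] [Module T M']
    [AddCommGroup F'] [Module T F'] {ι : Type*} (φ : S →+* T) {e : (M × F) ≃ₗ[S] (ι → S)}
    {e' : (M' × F') ≃ₗ[T] (ι → T)} {rM : M → M'} {rF : F → F'} (hrF : rF 0 = 0)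
    (he : ∀ m f, e' (rM m, rF f) = φ ∘ e (m, f)) (v : ι → S) :
    e'.fstProj (φ ∘ v) = φ ∘ e.fstProj v := by
  obtain ⟨⟨m, f⟩, rfl⟩ := e.surjective v
  rw [← he, fstProj_apply, symm_apply_apply, ← hrF, he, fstProj_apply, symm_apply_apply]

def fstEquivOfSplit (e : (M × F) ≃ₗ[S] E) (g : K →ₗ[S] E) (h : E →ₗ[S] K)
    (hhg : h ∘ₗ g = LinearMap.id) (hgh : g ∘ₗ h = e.fstProj) : M ≃ₗ[S] K :=
  .ofLinearMap (h ∘ₗ e.toLinearMap ∘ₗ LinearMap.inl S M F)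
    (LinearMap.fst S M F ∘ₗ e.symm.toLinearMap ∘ₗ g)
    (by
      ext a : 1
      have := congr(h ($hgh (g a)))
      simp only [LinearMap.comp_apply, fstProj_apply] at this
      simp [← this, ← LinearMap.comp_apply h g, hhg])
    (by
      ext m : 1
      have := congr($hgh (e (m, 0)))
      simp only [LinearMap.comp_apply, fstProj_apply, symm_apply_apply] at this
      simp [this])

@[simp]
theorem fstEquivOfSplit_apply (e : (M × F) ≃ₗ[S] E) (g : K →ₗ[S] E) (h : E →ₗ[S] K)
    (hhg : h ∘ₗ g = LinearMap.id) (hgh : g ∘ₗ h = e.fstProj) (m : M) :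
    e.fstEquivOfSplit g h hhg hgh m = h (e (m, 0)) := rfl

end LinearEquiv

theorem TopologicalSpace.Opens.exists_le_of_finite {X : Type*} [TopologicalSpace X] {ι : Type*}
    [Finite ι] {x : X} (V : ι → Opens X) (hx : ∀ i, x ∈ V i) :
    ∃ W : Opens X, x ∈ W ∧ ∀ i, W ≤ V i := by
  obtain ⟨t, ht, hto, hxt⟩ := eventually_nhds_iff.1
    (Filter.eventually_all.2 fun i => (V i).isOpen.mem_nhds (hx i))
  exact ⟨⟨t, hto⟩, hxt, fun i y hy => ht y hy i⟩

namespace TopCat.Presheaf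

variable {X : TopCat.{u}} (R : X.Presheaf CommRingCat.{u})

def resHom {V W : Opens X} (h : W ≤ V) : R.obj (op V) →+* R.obj (op W) :=
  (R.map (homOfLE h).op).hom

theorem resHom_resHom {V W Z : Opens X} (hWV : W ≤ V) (hZW : Z ≤ W) (r : R.obj (op V)) :
    R.resHom hZW (R.resHom hWV r) = R.resHom (hZW.trans hWV) r := by
  simp only [resHom, ← CommRingCat.comp_apply, ← R.map_comp]
  rfl

theorem germ_resHom {V W : Opens X} (h : W ≤ V) {x : X} (hx : x ∈ W) (r : R.obj (op V)) :
    (R.germ W x hx).hom (R.resHom h r) = (R.germ V x (h hx)).hom r :=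
  R.germ_res_apply (homOfLE h) x hx r

variable {R}

section

variable {m n : Type*} [Finite m] [Finite n]

theorem exists_matrix_map_germ_eq {x : X} {U : Opens X} (hxU : x ∈ U)
    (A : Matrix m n (R.stalk x)) :
    ∃ V ≤ U, ∃ (hxV : x ∈ V) (B : Matrix m n (R.obj (op V))),
      B.map (R.germ V x hxV).hom = A := by
  choose W hxW s hs using fun i j => R.exists_germ_eq (A i j)
  obtain ⟨W₀, hxW₀, hW₀⟩ :=
    Opens.exists_le_of_finite (fun p : m × n => W p.1 p.2) fun p => hxW p.1 p.2
  refine ⟨W₀ ⊓ U, inf_le_right, Opens.mem_inf.2 ⟨hxW₀, hxU⟩,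
    Matrix.of fun i j => R.resHom (inf_le_left.trans (hW₀ (i, j))) (s i j), ?_⟩
  ext i j
  rw [Matrix.map_apply, Matrix.of_apply, germ_resHom]
  exact hs i j

/-- Stated for all smaller opens, so that finitely many such conclusions can be combined by
intersecting the neighbourhoods. -/
theorem exists_forall_matrix_map_resHom_eq {x : X} {U V : Opens X} (hxU : x ∈ U) (hxV : x ∈ V)
    (A : Matrix m n (R.obj (op U))) (B : Matrix m n (R.obj (op V)))
    (h : A.map (R.germ U x hxU).hom = B.map (R.germ V x hxV).hom) :
    ∃ W : Opens X, x ∈ W ∧ ∀ (W' : Opens X) (hU : W' ≤ U) (hV : W' ≤ V), W' ≤ W →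
      A.map (R.resHom hU) = B.map (R.resHom hV) := by
  choose W hxW iU iV hW using fun i j =>
    R.germ_eq x hxU hxV (A i j) (B i j) (Matrix.ext_iff.2 h i j)
  obtain ⟨W₀, hxW₀, hW₀⟩ :=
    Opens.exists_le_of_finite (fun p : m × n => W p.1 p.2) fun p => hxW p.1 p.2
  refine ⟨W₀, hxW₀, fun W' hU hV hW' => Matrix.ext fun i j => ?_⟩
  have hle : W' ≤ W i j := hW'.trans (hW₀ (i, j))
  simp only [Matrix.map_apply, ← R.resHom_resHom (iU i j).le hle,
    ← R.resHom_resHom (iV i j).le hle]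
  exact congr(R.resHom hle $(hW i j))

end

theorem exists_mul_eq_of_map_germ_mul_eq {m n : Type*} [Fintype m] [Fintype n] [DecidableEq m]
    {x : X} {U : Opens X} (hxU : x ∈ U)
    (P : Matrix n n (R.obj (op U))) {G' : Matrix n m (R.stalk x)} {H' : Matrix m n (R.stalk x)}
    (hHG : H' * G' = 1) (hGH : G' * H' = P.map (R.germ U x hxU).hom) :
    ∃ (V : Opens X) (hVU : V ≤ U), x ∈ V ∧ ∃ (G : Matrix n m (R.obj (op V)))
      (H : Matrix m n (R.obj (op V))), H * G = 1 ∧ G * H = P.map (R.resHom hVU) := by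
  obtain ⟨V₁, hV₁U, hxV₁, G₁, hG₁⟩ := exists_matrix_map_germ_eq hxU G'
  obtain ⟨V₂, hV₂V₁, hxV₂, H₂, hH₂⟩ := exists_matrix_map_germ_eq hxV₁ H'
  set G₂ := G₁.map (R.resHom hV₂V₁)
  have hG₂ : G₂.map (R.germ V₂ x hxV₂).hom = G' := by
    rw [← hG₁, Matrix.map_map]
    exact congrArg _ (funext (R.germ_resHom hV₂V₁ hxV₂))
  obtain ⟨W₁, hxW₁, hW₁⟩ := exists_forall_matrix_map_resHom_eq hxV₂ hxV₂ (H₂ * G₂) 1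
    (by rw [Matrix.map_mul, Matrix.map_one _ (map_zero _) (map_one _), hG₂, hH₂, hHG])
  obtain ⟨W₂, hxW₂, hW₂⟩ := exists_forall_matrix_map_resHom_eq hxV₂ hxU (G₂ * H₂) P
    (by rw [Matrix.map_mul, hG₂, hH₂, hGH])
  have hVV₂ : W₁ ⊓ W₂ ⊓ V₂ ≤ V₂ := inf_le_right
  refine ⟨W₁ ⊓ W₂ ⊓ V₂, hVV₂.trans (hV₂V₁.trans hV₁U), ⟨⟨hxW₁, hxW₂⟩, hxV₂⟩,
    G₂.map (R.resHom hVV₂), H₂.map (R.resHom hVV₂), ?_, ?_⟩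
  · rw [← Matrix.map_mul, hW₁ _ hVV₂ hVV₂ (inf_le_left.trans inf_le_left),
      Matrix.map_one _ (map_zero _) (map_one _)]
  · rw [← Matrix.map_mul, hW₂ _ hVV₂ _ (inf_le_left.trans inf_le_right)]

end TopCat.Presheaf

namespace SheafOfModulesOver

variable {X : TopCat.{u}} {R : TopCat.Sheaf CommRingCat.{u} X}

theorem res_zero (M : SheafOfModulesOver R) {V W : Opens X} (h : W ≤ V) :
    M.res h (0 : M.obj V) = 0 := by
  simpa using M.res_add h 0 0

variable (M F : SheafOfModulesOver R) {U : Opens X} {N : ℕ}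
  {e : ∀ V : Opens X, V ≤ U →
    (M.obj V × F.obj V) ≃ₗ[R.presheaf.obj (op V)] (Fin N → R.presheaf.obj (op V))}

theorem toMatrix'_fstProj_eq_map
    (he : ∀ (V W : Opens X) (hVU : V ≤ U) (hWV : W ≤ V) (m : M.obj V) (f : F.obj V),
      e W (hWV.trans hVU) (M.res hWV m, F.res hWV f)
        = fun i => R.presheaf.map (homOfLE hWV).op (e V hVU (m, f) i))
    {W : Opens X} (hWU : W ≤ U) :
    LinearMap.toMatrix' (e W hWU).fstProj
      = (LinearMap.toMatrix' (e U le_rfl).fstProj).map (R.presheaf.resHom hWU) :=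
  LinearMap.toMatrix'_eq_map_of_map_comp _ _ _
    (LinearEquiv.fstProj_comp_map _ (F.res_zero hWU) (he U W le_rfl hWU))

theorem exists_equiv_pi_of_mul_eq
    (he : ∀ (V W : Opens X) (hVU : V ≤ U) (hWV : W ≤ V) (m : M.obj V) (f : F.obj V),
      e W (hWV.trans hVU) (M.res hWV m, F.res hWV f)
        = fun i => R.presheaf.map (homOfLE hWV).op (e V hVU (m, f) i))
    {V : Opens X} (hVU : V ≤ U) {k : ℕ} {G : Matrix (Fin N) (Fin k) (R.presheaf.obj (op V))}
    {H : Matrix (Fin k) (Fin N) (R.presheaf.obj (op V))} (hHG : H * G = 1)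
    (hGH : G * H = (LinearMap.toMatrix' (e U le_rfl).fstProj).map (R.presheaf.resHom hVU)) :
    ∃ e' : ∀ W : Opens X, W ≤ V →
        M.obj W ≃ₗ[R.presheaf.obj (op W)] (Fin k → R.presheaf.obj (op W)),
      ∀ (W Z : Opens X) (hWV : W ≤ V) (hZW : Z ≤ W) (m : M.obj W),
        e' Z (hZW.trans hWV) (M.res hZW m)
          = fun i => R.presheaf.map (homOfLE hZW).op (e' W hWV m i) := by
  refine ⟨fun W hWV => (e W (hWV.trans hVU)).fstEquivOfSplit
    (Matrix.toLin' (G.map (R.presheaf.resHom hWV)))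
    (Matrix.toLin' (H.map (R.presheaf.resHom hWV))) ?_ ?_, ?_⟩
  · rw [← Matrix.toLin'_mul, ← Matrix.map_mul, hHG, Matrix.map_one _ (map_zero _) (map_one _),
      Matrix.toLin'_one]
  · rw [← Matrix.toLin'_mul, ← Matrix.map_mul, hGH, Matrix.map_map,
      ← Matrix.toLin'_toMatrix' (e W _).fstProj, toMatrix'_fstProj_eq_map M F he (hWV.trans hVU)]
    congr 1
    ext i j
    exact R.presheaf.resHom_resHom hVU hWV _
  · intro W Z hWV hZW m
    have hH : H.map (R.presheaf.resHom (hZW.trans hWV))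
        = (H.map (R.presheaf.resHom hWV)).map (R.presheaf.resHom hZW) := by
      rw [Matrix.map_map]
      ext i j
      exact (R.presheaf.resHom_resHom hWV hZW _).symm
    funext i
    simp only [LinearEquiv.fstEquivOfSplit_apply, Matrix.toLin'_apply]
    rw [← F.res_zero hZW, he W Z _ hZW m 0, hH, RingHom.map_mulVec]
    rfl

end SheafOfModulesOver

/-- Let `R` be a sheaf of commutative rings on a topological
space `X` all of whose stalks are local rings, and let `M` be a sheaf of
`R`-modules which is locally projective of finite rank: every point has an
open neighborhood `U` on which there are an `N : ℕ` and a sheaf of modules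
`F` with `M|_U ⊕ F|_U ≅ (R|_U)^N` (an isomorphism of sheaves of modules on
`U`, i.e. a compatible family of `R(V)`-linear equivalences for `V ≤ U`).
Then `M` is locally free: every point has an open neighborhood `V` with
`M|_V ≅ (R|_V)^k` for some `k : ℕ`. -/
theorem stmt_0 {X : TopCat.{u}} (R : TopCat.Sheaf CommRingCat.{u} X)
    (hstalks : ∀ x : X, IsLocalRing (R.presheaf.stalk x))
    (M : SheafOfModulesOver R)
    (hproj : ∀ x : X, ∃ (U : Opens X) (_ : x ∈ U) (N : ℕ) (F : SheafOfModulesOver R)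
      (e : ∀ V : Opens X, V ≤ U →
        (M.obj V × F.obj V) ≃ₗ[R.presheaf.obj (op V)] (Fin N → R.presheaf.obj (op V))),
      ∀ (V W : Opens X) (hVU : V ≤ U) (hWV : W ≤ V) (m : M.obj V) (f : F.obj V),
        e W (hWV.trans hVU) (M.res hWV m, F.res hWV f)
          = fun i => R.presheaf.map (homOfLE hWV).op (e V hVU (m, f) i)) :
    ∀ x : X, ∃ (V : Opens X) (_ : x ∈ V) (k : ℕ)
      (e : ∀ W : Opens X, W ≤ V →
        M.obj W ≃ₗ[R.presheaf.obj (op W)] (Fin k → R.presheaf.obj (op W))),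
      ∀ (W Z : Opens X) (hWV : W ≤ V) (hZW : Z ≤ W) (m : M.obj W),
        e Z (hZW.trans hWV) (M.res hZW m)
          = fun i => R.presheaf.map (homOfLE hZW).op (e W hWV m i) := by
  intro x
  obtain ⟨U, hxU, N, F, e, he⟩ := hproj x
  set P := LinearMap.toMatrix' (e U le_rfl).fstProj
  have hP : IsIdempotentElem (P.map (R.presheaf.germ U x hxU).hom) := by
    rw [IsIdempotentElem, ← Matrix.map_mul, ← LinearMap.toMatrix'_mul,
      (LinearEquiv.isIdempotentElem_fstProj _).eq]
  have := hstalks x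
  obtain ⟨k, G', H', hHG', hGH'⟩ := Matrix.exists_mul_eq_one_and_mul_eq_of_isIdempotentElem hP
  obtain ⟨V, hVU, hxV, G, H, hHG, hGH⟩ :=
    R.presheaf.exists_mul_eq_of_map_germ_mul_eq hxU P hHG' hGH'
  obtain ⟨e', he'⟩ := M.exists_equiv_pi_of_mul_eq F he hVU hHG hGH
  exact ⟨V, hxV, k, e', he'⟩
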